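/- Let R₁, …, R_m ⊆ ℚ^n be semilinear sets, each satisfying the line condition, and let A ⊆ ℚ^n be a nonempty affine subspace such that aff(R_i ∩ A) = A for every i = 1, …, m. Then aff(R₁ ∩ … ∩ R_m ∩ A) = A; in particular, R₁ ∩ … ∩ R_m ∩ A is nonempty. -/

import Mathlib

/-- A linear set in ℚ^n: the solution set of a finite conjunction of linear
inequalities `c₁x₁+…+cₙxₙ ≤ b` or `c₁x₁+…+cₙxₙ < b` with rational coefficients. -/
def IsLinearSetQ (n : ℕ) (S : Set (Fin n → ℚ)) : Prop :=
  ∃ (m : ℕ) (c : Fin m → Fin n → ℚ) (b : Fin m → ℚ) (strict : Fin m → Bool),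
    S = {x | ∀ i, if strict i then (∑ j, c i j * x j) < b i else (∑ j, c i j * x j) ≤ b i}

/-- A semilinear set: a finite union of linear sets. -/
def IsSemilinear (n : ℕ) (S : Set (Fin n → ℚ)) : Prop :=
  ∃ (k : ℕ) (f : Fin k → Set (Fin n → ℚ)), (∀ i, IsLinearSetQ n (f i)) ∧ S = ⋃ i, f i

/-- The affine hull of S ⊆ ℚ^n: the set of all affine combinations
Σ xᵢ • pᵢ with pᵢ ∈ S, xᵢ ∈ ℚ, Σ xᵢ = 1. -/
def affHull {n : ℕ} (S : Set (Fin n → ℚ)) : Set (Fin n → ℚ) :=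
  {x | ∃ (k : ℕ) (w : Fin k → ℚ) (p : Fin k → (Fin n → ℚ)),
    (∀ i, p i ∈ S) ∧ (∑ i, w i) = 1 ∧ x = ∑ i, w i • p i}

/-- S satisfies the line condition if for all distinct a, b ∈ ℚ^n, whenever
{y ∈ ℚ | (1−y)•a + y•b ∈ S} contains at least two elements, it is unbounded
above and unbounded below. -/
def LineCondition {n : ℕ} (S : Set (Fin n → ℚ)) : Prop :=
  ∀ a b : Fin n → ℚ, a ≠ b →
    (∃ y₁ y₂ : ℚ, y₁ ≠ y₂ ∧ (1 - y₁) • a + y₁ • b ∈ S ∧ (1 - y₂) • a + y₂ • b ∈ S) →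
    (∀ K : ℚ, ∃ y : ℚ, K < y ∧ (1 - y) • a + y • b ∈ S) ∧
    (∀ K : ℚ, ∃ y : ℚ, y < K ∧ (1 - y) • a + y • b ∈ S)

/-! Call `X` tail-closed (`ContainsSecantTails`) if every line meeting `X` in two points lies
in `X` outside a bounded segment. A semilinear set meets a line in a finite union of intervals,
so by the line condition it is tail-closed, and so is its intersection with an affine subspace;
tail-closed sets are closed under finite intersections.

For tail-closed `X`, `Y` with the same affine span `A`, argue by induction on `dim A`. Choose
`x ∈ X` and an affine functional `φ` injective on finitely many points spanning `X` and `Y`.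
For every large level `c`, each secant from `x` to one of these points meets `X` on `{φ = c}`,
so `A` is spanned by `x` together with `X ∩ {φ = c}`; hence `X ∩ {φ = c}` and `Y ∩ {φ = c}` span
the same proper subspace `A ∩ {φ = c}`, and by induction so does `X ∩ Y ∩ {φ = c}`. Two such
slices, together with the secant through `x`, span `A`. -/

open Filter AffineMap Module

section Affine

variable {k V : Type*} [Field k] [AddCommGroup V] [Module k V]

theorem lineMap_mem_affineSpan_pair_lineMap {s₁ s₂ : k} (h : s₁ ≠ s₂) (p₀ p₁ : V) (t : k) :
    lineMap p₀ p₁ t ∈ line[k, lineMap p₀ p₁ s₁, lineMap p₀ p₁ s₂] := by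
  convert lineMap_mem_affineSpan_pair ((t - s₁) / (s₂ - s₁)) _ _ using 1
  rw [← apply_lineMap, lineMap_apply_ring', div_mul_cancel₀ _ (sub_ne_zero.2 h.symm),
    sub_add_cancel]

theorem AffineMap.apply_eq_of_mem_affineSpan (φ : V →ᵃ[k] k) {s : Set V} {c : k}
    (hs : ∀ p ∈ s, φ p = c) {p : V} (hp : p ∈ affineSpan k s) : φ p = c := by
  have h : φ p ∈ affineSpan k (φ '' s) := by
    rw [← AffineSubspace.map_span]; exact AffineSubspace.mem_map_of_mem φ hp
  have himg : φ '' s ⊆ {c} := by rintro _ ⟨q, hq, rfl⟩; exact hs q hq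
  simpa using affineSpan_mono k himg h

theorem mem_affineSpan_of_mem_affineSpan_insert (φ : V →ᵃ[k] k) {s : Set V} {c : k}
    (hs : ∀ p ∈ s, φ p = c) {x p : V} (hx : φ x ≠ c) (hp : p ∈ affineSpan k (insert x s))
    (hpc : φ p = c) : p ∈ affineSpan k s := by
  rcases s.eq_empty_or_nonempty with rfl | ⟨p₁, hp₁⟩
  · rw [insert_empty_eq, AffineSubspace.mem_affineSpan_singleton] at hp
    exact absurd (hp ▸ hpc) hx
  rw [← affineSpan_insert_affineSpan,
    AffineSubspace.mem_affineSpan_insert_iff (subset_affineSpan k s hp₁)] at hp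
  obtain ⟨r, p₀, hp₀, rfl⟩ := hp
  have hr : r * (φ x - c) = 0 := by
    rw [AffineMap.map_vadd, φ.apply_eq_of_mem_affineSpan hs hp₀, map_smul,
      AffineMap.linearMap_vsub, hs p₁ hp₁, vadd_eq_add, smul_eq_mul, vsub_eq_sub] at hpc
    linear_combination hpc
  obtain rfl : r = 0 := (mul_eq_zero.1 hr).resolve_right (sub_ne_zero.2 hx)
  simpa using hp₀

theorem exists_affineMap_injOn [Infinite k] {T : Set V} (hT : T.Finite) :
    ∃ φ : V →ᵃ[k] k, Set.InjOn φ T := by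
  let ι := {pq : V × V // pq ∈ T ×ˢ T ∧ pq.1 ≠ pq.2}
  have : Finite ι := ((hT.prod hT).subset fun _ h => h.1).to_subtype
  obtain ⟨ℓ, hℓ⟩ := Module.exists_dual_forall_apply_ne_zero (K := k)
    (fun pq : ι => pq.1.1 - pq.1.2) fun pq => sub_ne_zero.2 pq.2.2
  refine ⟨ℓ.toAffineMap, fun p hp q hq hpq =>
    by_contra fun hne => hℓ ⟨(p, q), ⟨hp, hq⟩, hne⟩ ?_⟩
  simpa [sub_eq_zero] using hpq

theorem exists_finite_subset_affineSpan_eq [FiniteDimensional k V] (s : Set V) :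
    ∃ t ⊆ s, t.Finite ∧ affineSpan k t = affineSpan k s := by
  obtain ⟨t, hts, hspan, hind⟩ := exists_affineIndependent k V s
  exact ⟨t, hts, finite_set_of_fin_dim_affineIndependent k hind, hspan⟩

theorem affineSpan_inter_eq_of_subsingleton {X Y : Set V} (hX : X.Subsingleton)
    (hXY : affineSpan k X = affineSpan k Y) : affineSpan k (X ∩ Y) = affineSpan k X := by
  rcases hX.eq_empty_or_singleton with rfl | ⟨x, rfl⟩
  · simp
  have hYx : Y ⊆ {x} := fun y hy => by
    simpa [← hXY] using subset_affineSpan k Y hy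
  have hYne : Y.Nonempty :=
    (affineSpan_nonempty k).1 (hXY ▸ (affineSpan_nonempty k).2 (Set.singleton_nonempty x))
  rw [(hYne.subset_singleton_iff).1 hYx, Set.inter_self]

theorem affineSpan_inter_preimage_le {X Y : Set V} (φ : V →ᵃ[k] k) {x : V} {c : k}
    (hx : φ x ≠ c) (hY : Y ⊆ affineSpan k (insert x (X ∩ φ ⁻¹' {c}))) :
    affineSpan k (Y ∩ φ ⁻¹' {c}) ≤ affineSpan k (X ∩ φ ⁻¹' {c}) :=
  affineSpan_le.2 fun _ hp =>
    mem_affineSpan_of_mem_affineSpan_insert φ (fun _ hq => hq.2) hx (hY hp.1) hp.2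

theorem finrank_direction_affineSpan_inter_preimage_lt [FiniteDimensional k V] {X : Set V}
    (φ : V →ᵃ[k] k) {x : V} {c : k} (hx : x ∈ X) (hcx : φ x ≠ c) (hne : (X ∩ φ ⁻¹' {c}).Nonempty) :
    finrank k (affineSpan k (X ∩ φ ⁻¹' {c})).direction <
      finrank k (affineSpan k X).direction := by
  have hlt : affineSpan k (X ∩ φ ⁻¹' {c}) < affineSpan k X :=
    lt_of_le_of_ne (affineSpan_mono k Set.inter_subset_left) fun h =>
      hcx (φ.apply_eq_of_mem_affineSpan (fun _ hq => hq.2) (h ▸ subset_affineSpan k X hx))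
  exact Submodule.finrank_lt_finrank_of_lt
    (AffineSubspace.direction_lt_of_nonempty hlt ((affineSpan_nonempty k).2 hne))

end Affine

section Tails

variable (k : Type*) {V : Type*} [Field k] [LinearOrder k] [AddCommGroup V] [Module k V]

def ContainsSecantTails (X : Set V) : Prop :=
  ∀ p ∈ X, ∀ q ∈ X, p ≠ q → ∀ᶠ t in (atTop ⊔ atBot : Filter k), lineMap p q t ∈ X

variable {k}

theorem AffineSubspace.containsSecantTails (A : AffineSubspace k V) :
    ContainsSecantTails k (A : Set V) :=
  fun _ hp _ hq _ => Eventually.of_forall fun t => lineMap_mem t hp hq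

theorem containsSecantTails_preimage_singleton (φ : V →ᵃ[k] k) (c : k) :
    ContainsSecantTails k (φ ⁻¹' {c}) := fun p hp q hq _ =>
  Eventually.of_forall fun t => by simp_all [apply_lineMap]

theorem ContainsSecantTails.inter {X Y : Set V} (hX : ContainsSecantTails k X)
    (hY : ContainsSecantTails k Y) : ContainsSecantTails k (X ∩ Y) :=
  fun p hp q hq hpq => (hX p hp.1 q hq.1 hpq).and (hY p hp.2 q hq.2 hpq)

theorem ContainsSecantTails.biInter {ι : Type*} {X : ι → Set V} (s : Finset ι)
    (hX : ∀ i ∈ s, ContainsSecantTails k (X i)) : ContainsSecantTails k (⋂ i ∈ s, X i) := by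
  intro p hp q hq hpq
  simp only [Set.mem_iInter₂] at hp hq ⊢
  exact (eventually_all_finset s).2 fun i hi => hX i hi p (hp i hi) q (hq i hi) hpq

variable [IsStrictOrderedRing k]

theorem tendsto_sub_div_atTop_sup_atBot {a d : k} (hd : d ≠ 0) :
    Tendsto (fun c => (c - a) / d) atTop (atTop ⊔ atBot) := by
  have h : Tendsto (fun c : k => c - a) atTop atTop := by
    simpa only [_root_.id, sub_eq_add_neg] using
      tendsto_atTop_add_const_right atTop (-a) tendsto_id
  rcases hd.lt_or_gt with hneg | hpos
  · exact ((tendsto_div_const_atBot_of_neg hneg).2 h).mono_right le_sup_right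
  · exact (h.atTop_div_const hpos).mono_right le_sup_left

theorem ContainsSecantTails.eventually_lineMap_mem_slice {X : Set V}
    (hX : ContainsSecantTails k X) (φ : V →ᵃ[k] k) {x f : V} (hx : x ∈ X) (hf : f ∈ X)
    (hφ : φ f ≠ φ x) :
    ∀ᶠ c in atTop, lineMap x f ((c - φ x) / (φ f - φ x)) ∈ X ∩ φ ⁻¹' {c} := by
  have hd : φ f - φ x ≠ 0 := sub_ne_zero.2 hφ
  filter_upwards [(tendsto_sub_div_atTop_sup_atBot hd).eventually
    (hX x hx f hf (ne_of_apply_ne φ hφ).symm)] with c hc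
  refine ⟨hc, ?_⟩
  simp [apply_lineMap, lineMap_apply_ring', div_mul_cancel₀ _ hd]

end Tails

section Core

variable {k V : Type*} [Field k] [LinearOrder k] [IsStrictOrderedRing k] [AddCommGroup V]
  [Module k V] [FiniteDimensional k V]

theorem ContainsSecantTails.exists_finite_eventually_affineSpan_le {X : Set V}
    (hX : ContainsSecantTails k X) {x : V} (hx : x ∈ X) :
    ∃ F : Set V, F.Finite ∧ x ∈ F ∧ ∀ φ : V →ᵃ[k] k, Set.InjOn φ F →
      ∀ᶠ c in atTop, φ x ≠ c ∧ affineSpan k X ≤ affineSpan k (insert x (X ∩ φ ⁻¹' {c})) := by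
  obtain ⟨F, hFX, hF, hFspan⟩ := exists_finite_subset_affineSpan_eq (k := k) X
  refine ⟨insert x F, hF.insert x, Set.mem_insert x F, fun φ hφ => ?_⟩
  have hφx : ∀ f ∈ F, f ≠ x → φ f ≠ φ x := fun f hf hfx h =>
    hfx (hφ (Set.mem_insert_of_mem _ hf) (Set.mem_insert _ _) h)
  have hpts : ∀ᶠ c in atTop, ∀ f ∈ {f ∈ F | f ≠ x},
      lineMap x f ((c - φ x) / (φ f - φ x)) ∈ X ∩ φ ⁻¹' {c} :=
    (eventually_all_finite (hF.subset (Set.sep_subset _ _))).2 fun f hf =>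
      hX.eventually_lineMap_mem_slice φ hx (hFX hf.1) (hφx f hf.1 hf.2)
  filter_upwards [hpts, eventually_ne_atTop (φ x)] with c hc hcx
  refine ⟨Ne.symm hcx, hFspan ▸ affineSpan_le.2 fun f hf => ?_⟩
  by_cases hfx : f = x
  · rw [hfx]; exact mem_affineSpan k (Set.mem_insert x _)
  have hs : (0 : k) ≠ (c - φ x) / (φ f - φ x) :=
    (div_ne_zero (sub_ne_zero.2 hcx) (sub_ne_zero.2 (hφx f hf hfx))).symm
  have hline := lineMap_mem_affineSpan_pair_lineMap hs x f 1
  rw [lineMap_apply_zero, lineMap_apply_one] at hline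
  exact affineSpan_pair_le_of_mem_of_mem (mem_affineSpan k (Set.mem_insert x _))
    (mem_affineSpan k (Set.mem_insert_of_mem x (hc f ⟨hf, hfx⟩))) hline

theorem ContainsSecantTails.affineSpan_inter {X Y : Set V} (hX : ContainsSecantTails k X)
    (hY : ContainsSecantTails k Y) (hXY : affineSpan k X = affineSpan k Y) :
    affineSpan k (X ∩ Y) = affineSpan k X := by
  induction hd : finrank k (affineSpan k X).direction using Nat.strong_induction_on
    generalizing X Y with
  | _ d ih =>
  by_cases hsub : X.Subsingleton
  · exact affineSpan_inter_eq_of_subsingleton hsub hXY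
  obtain ⟨x, hx, x', hx', hxx'⟩ := Set.not_subsingleton_iff.1 hsub
  obtain ⟨y, hy⟩ : Y.Nonempty :=
    (affineSpan_nonempty k).1 (hXY ▸ (affineSpan_nonempty k).2 ⟨x, hx⟩)
  obtain ⟨F, hF, hxF, hFX⟩ := hX.exists_finite_eventually_affineSpan_le hx
  obtain ⟨G, hG, -, hGY⟩ := hY.exists_finite_eventually_affineSpan_le hy
  obtain ⟨φ, hφ⟩ := exists_affineMap_injOn (k := k) ((hF.union hG).insert x')
  have hφx' : φ x' ≠ φ x := fun h => hxx' (hφ (by simp) (by simp [hxF]) h).symm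
  have hslice : ∀ᶠ c in atTop, affineSpan k (X ∩ φ ⁻¹' {c}) ≤ affineSpan k (X ∩ Y) ∧
      lineMap x x' ((c - φ x) / (φ x' - φ x)) ∈ X ∩ φ ⁻¹' {c} := by
    filter_upwards [hFX φ (hφ.mono (by grind)), hGY φ (hφ.mono (by grind)),
      hX.eventually_lineMap_mem_slice φ hx hx' hφx'] with c ⟨hcx, hXc⟩ ⟨hcy, hYc⟩ hpt
    refine ⟨?_, hpt⟩
    have hrank := hd ▸ finrank_direction_affineSpan_inter_preimage_lt φ hx hcx ⟨_, hpt⟩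
    have hspan : affineSpan k (X ∩ φ ⁻¹' {c}) = affineSpan k (Y ∩ φ ⁻¹' {c}) :=
      le_antisymm
        (affineSpan_inter_preimage_le φ hcy ((subset_affineSpan k X).trans (hXY ▸ hYc)))
        (affineSpan_inter_preimage_le φ hcx ((subset_affineSpan k Y).trans (hXY ▸ hXc)))
    rw [← ih _ hrank (hX.inter (containsSecantTails_preimage_singleton φ c))
      (hY.inter (containsSecantTails_preimage_singleton φ c)) hspan rfl]
    exact affineSpan_mono k fun p hp => ⟨hp.1.1, hp.2.1⟩
  obtain ⟨c₁, hc₁⟩ := (hslice.and (hFX φ (hφ.mono (by grind)))).exists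
  obtain ⟨c₂, hc₂, hc₁₂⟩ := (hslice.and (eventually_gt_atTop c₁)).exists
  have hxS : x ∈ affineSpan k (X ∩ Y) := by
    have hne : (c₁ - φ x) / (φ x' - φ x) ≠ (c₂ - φ x) / (φ x' - φ x) :=
      fun h => hc₁₂.ne (by rwa [div_left_inj' (sub_ne_zero.2 hφx'), sub_left_inj] at h)
    have hline := lineMap_mem_affineSpan_pair_lineMap hne x x' 0
    rw [lineMap_apply_zero] at hline
    exact affineSpan_pair_le_of_mem_of_mem (hc₁.1.1 (subset_affineSpan k _ hc₁.1.2))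
      (hc₂.1 (subset_affineSpan k _ hc₂.2)) hline
  refine le_antisymm (affineSpan_mono k Set.inter_subset_left) ?_
  calc affineSpan k X ≤ affineSpan k (insert x (X ∩ φ ⁻¹' {c₁})) := hc₁.2.2
    _ ≤ affineSpan k (X ∩ Y) :=
      affineSpan_le.2 (Set.insert_subset hxS ((subset_affineSpan k _).trans hc₁.1.1))

theorem ContainsSecantTails.affineSpan_biInter_inter {ι : Type*} (A : AffineSubspace k V)
    {X : ι → Set V} (hX : ∀ i, ContainsSecantTails k (X i))
    (hXA : ∀ i, affineSpan k (X i ∩ A) = A) (s : Finset ι) :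
    affineSpan k ((⋂ i ∈ s, X i) ∩ A) = A := by
  classical
  induction s using Finset.induction_on with
  | empty => simp
  | insert j s _ ih =>
    have hA := A.containsSecantTails
    have hsA := (ContainsSecantTails.biInter s fun i _ => hX i).inter hA
    rw [Finset.set_biInter_insert, Set.inter_inter_distrib_right,
      ((hX j).inter hA).affineSpan_inter hsA (by rw [hXA, ih]), hXA]

end Core

section Semilinear

theorem eventually_of_frequently_affine_ineq {k : Type*} [Field k] [LinearOrder k]
    [IsStrictOrderedRing k] {α β b : k} {s : Bool}
    (h : ∃ᶠ t in atTop, if s then α + t * β < b else α + t * β ≤ b) :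
    ∀ᶠ t in atTop, if s then α + t * β < b else α + t * β ≤ b := by
  rcases lt_trichotomy β 0 with hβ | rfl | hβ
  · have hlim : Tendsto (fun t => α + t * β) atTop atBot :=
      tendsto_atBot_add_const_left _ α (tendsto_id.atTop_mul_const_of_neg hβ)
    filter_upwards [hlim.eventually_lt_atBot b] with t ht
    cases s <;> simp [ht, ht.le]
  · obtain ⟨_, ht⟩ := h.exists
    exact .of_forall fun _ => by simpa using ht
  · have hlim : Tendsto (fun t => α + t * β) atTop atTop :=
      tendsto_atTop_add_const_left _ α (tendsto_id.atTop_mul_const hβ)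
    refine absurd h (not_frequently.2 ?_)
    filter_upwards [hlim.eventually_gt_atTop b] with t ht
    cases s <;> simp [not_lt_of_gt ht, not_le_of_gt ht]

variable {n : ℕ}

theorem IsLinearSetQ.eventually_of_frequently {L : Set (Fin n → ℚ)} (hL : IsLinearSetQ n L)
    (p v : Fin n → ℚ) (h : ∃ᶠ t : ℚ in atTop, p + t • v ∈ L) :
    ∀ᶠ t : ℚ in atTop, p + t • v ∈ L := by
  obtain ⟨m, c, b, strict, rfl⟩ := hL
  have hray : ∀ (t : ℚ) i, ∑ j, c i j * (p + t • v) j =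
      (∑ j, c i j * p j) + t * ∑ j, c i j * v j := by
    intro t i
    simp [mul_add, Finset.sum_add_distrib, Finset.mul_sum, mul_left_comm]
  simp only [Set.mem_ofPred_eq, hray] at h ⊢
  exact eventually_all.2 fun i => eventually_of_frequently_affine_ineq (h.mono fun t ht => ht i)

theorem IsSemilinear.eventually_of_frequently {S : Set (Fin n → ℚ)} (hS : IsSemilinear n S)
    (p v : Fin n → ℚ) (h : ∃ᶠ t : ℚ in atTop, p + t • v ∈ S) :
    ∀ᶠ t : ℚ in atTop, p + t • v ∈ S := by
  obtain ⟨k, f, hf, rfl⟩ := hS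
  simp only [Set.mem_iUnion] at h ⊢
  obtain ⟨i, hi⟩ := frequently_exists.1 h
  exact ((hf i).eventually_of_frequently p v hi).mono fun t ht => ⟨i, ht⟩

theorem LineCondition.containsSecantTails {S : Set (Fin n → ℚ)} (hl : LineCondition S)
    (hS : IsSemilinear n S) : ContainsSecantTails ℚ S := by
  intro p hp q hq hpq
  obtain ⟨hup, hdown⟩ := hl p q hpq ⟨0, 1, zero_ne_one, by simpa using hp, by simpa using hq⟩
  have hfwd : ∀ᶠ t : ℚ in atTop, p + t • (q - p) ∈ S :=
    hS.eventually_of_frequently p (q - p) <| frequently_atTop'.2 fun K => by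
      obtain ⟨y, hy, hyS⟩ := hup K
      exact ⟨y, hy, by convert hyS using 1; module⟩
  have hbwd : ∀ᶠ t : ℚ in atTop, p + t • (p - q) ∈ S :=
    hS.eventually_of_frequently p (p - q) <| frequently_atTop'.2 fun K => by
      obtain ⟨y, hy, hyS⟩ := hdown (-K)
      exact ⟨-y, by linarith, by convert hyS using 1; module⟩
  refine eventually_sup.2 ⟨hfwd.mono fun t ht => ?_,
    (tendsto_neg_atBot_atTop.eventually hbwd).mono fun t ht => ?_⟩
  · convert ht using 1; rw [lineMap_apply_module']; module
  · convert ht using 1; rw [lineMap_apply_module']; module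

theorem affHull_eq_affineSpan (S : Set (Fin n → ℚ)) : affHull S = affineSpan ℚ S := by
  ext x
  constructor
  · rintro ⟨k, w, p, hp, hw, rfl⟩
    have hx := affineCombination_mem_affineSpan hw p
    rw [Finset.affineCombination_eq_linear_combination _ _ _ hw] at hx
    exact affineSpan_mono ℚ (Set.range_subset_iff.2 hp) hx
  · intro hx
    rw [← Subtype.range_coe (s := S)] at hx
    obtain ⟨s, w, hw, rfl⟩ := eq_affineCombination_of_mem_affineSpan hx
    rw [Finset.affineCombination_eq_linear_combination _ _ _ hw]
    refine ⟨s.card, fun i => w (s.equivFin.symm i), fun i => s.equivFin.symm i,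
      fun i => (s.equivFin.symm i : S).2, ?_, ?_⟩
    · rw [← hw, ← s.sum_coe_sort]; exact s.equivFin.symm.sum_comp fun i => w i
    · rw [← s.sum_coe_sort]
      exact (s.equivFin.symm.sum_comp fun i => w i • (i : Fin n → ℚ)).symm

end Semilinear

/-- Let R₁, …, R_m ⊆ ℚ^n be semilinear sets satisfying the line condition and
let A be a nonempty affine subspace with aff(Rᵢ ∩ A) = A for each i.  Then
aff(R₁ ∩ … ∩ R_m ∩ A) = A; in particular this intersection is nonempty. -/
theorem stmt6 {n m : ℕ} (R : Fin m → Set (Fin n → ℚ))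
    (hsl : ∀ i, IsSemilinear n (R i)) (hline : ∀ i, LineCondition (R i))
    (A : Set (Fin n → ℚ)) (hAne : A.Nonempty) (hAaff : affHull A = A)
    (h : ∀ i, affHull (R i ∩ A) = A) :
    affHull ((⋂ i, R i) ∩ A) = A ∧ ((⋂ i, R i) ∩ A).Nonempty := by
  have hA : (affineSpan ℚ A : Set (Fin n → ℚ)) = A := by rw [← affHull_eq_affineSpan, hAaff]
  have hRA : ∀ i, affineSpan ℚ (R i ∩ affineSpan ℚ A) = affineSpan ℚ A := fun i => by
    rw [← SetLike.coe_set_eq, hA, ← affHull_eq_affineSpan, h i]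
  have hspan := ContainsSecantTails.affineSpan_biInter_inter (affineSpan ℚ A)
    (fun i => (hline i).containsSecantTails (hsl i)) hRA Finset.univ
  simp only [Finset.mem_univ, Set.iInter_true, hA] at hspan
  have hhull : affHull ((⋂ i, R i) ∩ A) = A := by rw [affHull_eq_affineSpan, hspan, hA]
  exact ⟨hhull, (affineSpan_nonempty ℚ).1 (by rwa [hspan, hA])⟩
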